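/- Let (A, μ, R, p^A, q^A) be a Rota-Baxter family BiHom-Ω-associative algebra of weight λ and (M, ▷, ◁, T, p^M, q^M) a Rota-Baxter family BiHom-Ω-bimodule over A. Given families ψ_{α,β} : A ⊗ A → M and χ_ω : A → M compatible with the p, q structure maps, define on A ⊕ M: μ^ψ_{α,β}((a,m),(b,n)) = (μ_{α,β}(a,b), a ▷_{α,β} n + m ◁_{α,β} b + ψ_{α,β}(a,b)), T^χ_ω(a,m) = (R_ω(a), χ_ω(a) + T_ω(m)), with componentwise structure maps. Then (A ⊕ M, μ^ψ, T^χ, p, q) is a Rota-Baxter family BiHom-Ω-associative algebra of weight λ if and only if (ψ, χ) is a 2-cocycle in C²_{RBFA_λ}(A, M), i.e., δ²_Alg(ψ) = 0 and ∂¹(χ) + Φ²(ψ) = 0. -/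
import Mathlib


section

variable {k Ω A M : Type*} [CommRing k] [Monoid Ω]
  [AddCommGroup A] [Module k A] [AddCommGroup M] [Module k M]

/-- A BiHom-`Ω`-associative algebra structure. -/
def IsBiHomAssoc {B : Type*} [AddCommGroup B] [Module k B]
    (mul : Ω → Ω → B →ₗ[k] B →ₗ[k] B) (p q : Ω → B →ₗ[k] B) : Prop :=
  (∀ α β x, p α (q β x) = q β (p α x)) ∧
  (∀ α β x y, p (α * β) (mul α β x y) = mul α β (p α x) (p β y)) ∧
  (∀ α β x y, q (α * β) (mul α β x y) = mul α β (q α x) (q β y)) ∧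
  (∀ α β γ x y z,
    mul α (β * γ) (p α x) (mul β γ y z) = mul (α * β) γ (mul α β x y) (q γ z))

/-- A Rota-Baxter family BiHom-`Ω`-associative algebra of weight `λ`. -/
def IsRBFBiHomAssoc {B : Type*} [AddCommGroup B] [Module k B] (lam : k)
    (mul : Ω → Ω → B →ₗ[k] B →ₗ[k] B) (R p q : Ω → B →ₗ[k] B) : Prop :=
  IsBiHomAssoc mul p q ∧
  (∀ ω x, p ω (R ω x) = R ω (p ω x)) ∧
  (∀ ω x, q ω (R ω x) = R ω (q ω x)) ∧
  (∀ α β x y,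
    mul α β (R α x) (R β y)
      = R (α * β) (mul α β (R α x) y) + R (α * β) (mul α β x (R β y))
        + lam • R (α * β) (mul α β x y))

/-- A bimodule over a BiHom-`Ω`-associative algebra. -/
def IsBiHomBimodule
    (mul : Ω → Ω → A →ₗ[k] A →ₗ[k] A) (p q : Ω → A →ₗ[k] A)
    (l : Ω → Ω → A →ₗ[k] M →ₗ[k] M) (r : Ω → Ω → M →ₗ[k] A →ₗ[k] M)
    (pM qM : Ω → M →ₗ[k] M) : Prop :=
  (∀ α β x m, pM (α * β) (l α β x m) = l α β (p α x) (pM β m)) ∧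
  (∀ α β x m, qM (α * β) (l α β x m) = l α β (q α x) (qM β m)) ∧
  (∀ α β γ x x' m,
    l α (β * γ) (p α x) (l β γ x' m) = l (α * β) γ (mul α β x x') (qM γ m)) ∧
  (∀ α β m x, pM (α * β) (r α β m x) = r α β (pM α m) (p β x)) ∧
  (∀ α β m x, qM (α * β) (r α β m x) = r α β (qM α m) (q β x)) ∧
  (∀ α β γ m x x',
    r α (β * γ) (pM α m) (mul β γ x x') = r (α * β) γ (r α β m x) (q γ x')) ∧
  (∀ α β γ x m x',
    l α (β * γ) (p α x) (r β γ m x') = r (α * β) γ (l α β x m) (q γ x'))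

/-- The extension multiplication `μ^ψ` on `A ⊕ M`:
`(a,m) ∗ (b,n) = (μ(a,b), a ▷ n + m ◁ b + ψ(a,b))`. -/
def extMul (mul : Ω → Ω → A →ₗ[k] A →ₗ[k] A)
    (l : Ω → Ω → A →ₗ[k] M →ₗ[k] M) (r : Ω → Ω → M →ₗ[k] A →ₗ[k] M)
    (ψ : Ω → Ω → A →ₗ[k] A →ₗ[k] M)
    (α β : Ω) : (A × M) →ₗ[k] (A × M) →ₗ[k] (A × M) :=
  LinearMap.mk₂ k
    (fun u v => (mul α β u.1 v.1, l α β u.1 v.2 + r α β u.2 v.1 + ψ α β u.1 v.1))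
    (fun u u' v => by simp [Prod.ext_iff]; abel)
    (fun c u v => by simp [Prod.ext_iff, smul_add])
    (fun u v v' => by simp [Prod.ext_iff]; abel)
    (fun c u v => by simp [Prod.ext_iff, smul_add])

/-- The extension operator `T^χ` on `A ⊕ M`: `T^χ(a,m) = (R a, χ a + T m)`. -/
def extOp (R : Ω → A →ₗ[k] A) (T : Ω → M →ₗ[k] M) (χ : Ω → A →ₗ[k] M)
    (ω : Ω) : (A × M) →ₗ[k] (A × M) :=
  LinearMap.prod ((R ω).comp (LinearMap.fst k A M))
    ((χ ω).comp (LinearMap.fst k A M) + (T ω).comp (LinearMap.snd k A M))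

@[simp] lemma extMul_apply (mul : Ω → Ω → A →ₗ[k] A →ₗ[k] A)
    (l : Ω → Ω → A →ₗ[k] M →ₗ[k] M) (r : Ω → Ω → M →ₗ[k] A →ₗ[k] M)
    (ψ : Ω → Ω → A →ₗ[k] A →ₗ[k] M) (α β : Ω) (u v : A × M) :
    extMul mul l r ψ α β u v
      = (mul α β u.1 v.1, l α β u.1 v.2 + r α β u.2 v.1 + ψ α β u.1 v.1) := rfl

@[simp] lemma extOp_apply (R : Ω → A →ₗ[k] A) (T : Ω → M →ₗ[k] M)
    (χ : Ω → A →ₗ[k] M) (ω : Ω) (u : A × M) :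
    extOp R T χ ω u = (R ω u.1, χ ω u.1 + T ω u.2) := rfl

/-- `(A ⊕ M, μ^ψ, T^χ, p ⊕ pM, q ⊕ qM)` is a Rota-Baxter family
BiHom-`Ω`-associative algebra of weight `λ` if and only if `(ψ, χ)` is a
2-cocycle in `C²_{RBFA_λ}(A, M)`. -/
theorem extension_isRBF_iff_two_cocycle (lam : k)
    (mul : Ω → Ω → A →ₗ[k] A →ₗ[k] A) (R p q : Ω → A →ₗ[k] A)
    (l : Ω → Ω → A →ₗ[k] M →ₗ[k] M) (r : Ω → Ω → M →ₗ[k] A →ₗ[k] M)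
    (T pM qM : Ω → M →ₗ[k] M)
    (ψ : Ω → Ω → A →ₗ[k] A →ₗ[k] M) (χ : Ω → A →ₗ[k] M)
    -- `A` is a Rota-Baxter family BiHom-`Ω`-associative algebra of weight `λ`
    (hA : IsRBFBiHomAssoc lam mul R p q)
    -- `M` is a Rota-Baxter family BiHom-`Ω`-bimodule over `A`
    (hMpq : ∀ α β m, pM α (qM β m) = qM β (pM α m))
    (hM : IsBiHomBimodule mul p q l r pM qM)
    (hpT : ∀ ω m, pM ω (T ω m) = T ω (pM ω m))
    (hqT : ∀ ω m, qM ω (T ω m) = T ω (qM ω m))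
    (hTl : ∀ α β a m,
      l α β (R α a) (T β m)
        = T (α * β) (l α β a (T β m) + l α β (R α a) m + lam • l α β a m))
    (hTr : ∀ α β m a,
      r α β (T α m) (R β a)
        = T (α * β) (r α β m (R β a) + r α β (T α m) a + lam • r α β m a))
    -- `(ψ, χ)` is compatible with the structure maps
    (hψp : ∀ α β a b, pM (α * β) (ψ α β a b) = ψ α β (p α a) (p β b))
    (hψq : ∀ α β a b, qM (α * β) (ψ α β a b) = ψ α β (q α a) (q β b))
    (hχp : ∀ ω a, pM ω (χ ω a) = χ ω (p ω a))
    (hχq : ∀ ω a, qM ω (χ ω a) = χ ω (q ω a)) :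
    IsRBFBiHomAssoc lam (extMul mul l r ψ) (extOp R T χ)
        (fun ω => (p ω).prodMap (pM ω)) (fun ω => (q ω).prodMap (qM ω))
      ↔ ((∀ α β γ a b c,
            l α (β * γ) (p α a) (ψ β γ b c) - ψ (α * β) γ (mul α β a b) (q γ c)
              + ψ α (β * γ) (p α a) (mul β γ b c)
              - r (α * β) γ (ψ α β a b) (q γ c) = 0) ∧
          (∀ α β x y,
            (l α β (R α x) (χ β y) - T (α * β) (l α β x (χ β y))
              - χ (α * β) (mul α β x (R β y) + mul α β (R α x) y
                  + lam • mul α β x y)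
              + r α β (χ α x) (R β y) - T (α * β) (r α β (χ α x) y))
            + (ψ α β (R α x) (R β y)
              - T (α * β) (ψ α β (R α x) y + ψ α β x (R β y)
                  + lam • ψ α β x y)) = 0)) := by
  obtain ⟨⟨hpq, hpmul, hqmul, hassoc⟩, hpR, hqR, hRB⟩ := hA
  obtain ⟨hl1, hl2, hl3, hr1, hr2, hr3, hlr⟩ := hM
  constructor
  · rintro ⟨⟨-, -, -, hAssoc⟩, -, -, hRBE⟩
    constructor
    · intro α β γ a b c
      have h := congrArg Prod.snd (hAssoc α β γ (a, 0) (b, 0) (c, 0))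
      simp only [extMul_apply, LinearMap.prodMap_apply, map_zero, add_zero,
        zero_add, LinearMap.map_zero₂, LinearMap.zero_apply] at h
      linear_combination (norm := module) h
    · intro α β x y
      have h := congrArg Prod.snd (hRBE α β (x, 0) (y, 0))
      simp only [extMul_apply, extOp_apply, Prod.fst_add, Prod.snd_add,
        Prod.smul_fst, Prod.smul_snd, map_zero, add_zero, zero_add,
        LinearMap.map_zero₂, LinearMap.zero_apply, map_add, map_smul] at h
      simp only [map_add, map_smul]
      linear_combination (norm := module) h
  · rintro ⟨h1, h2⟩
    refine ⟨⟨?_, ?_, ?_, ?_⟩, ?_, ?_, ?_⟩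
    · intro α β x
      simp [Prod.ext_iff, hpq, hMpq]
    · intro α β x y
      simp [Prod.ext_iff, hpmul, hl1, hr1, hψp, map_add]
    · intro α β x y
      simp [Prod.ext_iff, hqmul, hl2, hr2, hψq, map_add]
    · intro α β γ x y z
      simp only [extMul_apply, LinearMap.prodMap_apply, Prod.mk.injEq, map_add,
        LinearMap.add_apply]
      refine ⟨hassoc α β γ x.1 y.1 z.1, ?_⟩
      linear_combination (norm := module) h1 α β γ x.1 y.1 z.1
        + hl3 α β γ x.1 y.1 z.2 + hlr α β γ x.1 y.2 z.1 + hr3 α β γ x.2 y.1 z.1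
    · intro ω x
      simp [Prod.ext_iff, hpR, hpT, hχp, map_add]
    · intro ω x
      simp [Prod.ext_iff, hqR, hqT, hχq, map_add]
    · intro α β x y
      simp only [extMul_apply, extOp_apply, Prod.mk_add_mk, Prod.smul_mk,
        Prod.mk.injEq]
      refine ⟨hRB α β x.1 y.1, ?_⟩
      have e1 := hTl α β x.1 y.2
      have e2 := hTr α β x.2 y.1
      have e3 := h2 α β x.1 y.1
      simp only [map_add, map_smul, LinearMap.add_apply, LinearMap.smul_apply]
        at e1 e2 e3 ⊢
      linear_combination (norm := module) e1 + e2 + e3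


end
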